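/- arXiv:2311.11634 — 7 statements merged into one kernel-verified Lean document; each statement's English description precedes it below -/
import Mathlib

section
/- Let q = p^e with p an odd prime, and let C be a linear code of length n over GF(q) containing the all-one vector 1. If every codeword of C has Hamming weight divisible by p, then C is self-orthogonal. -/
/-- Let q = p^e with p an odd prime, and C a linear code of length n over GF(q) containing
the all-one vector. If every codeword has Hamming weight divisible by p, then C is
self-orthogonal. -/
theorem stmt1 {p : ℕ} (hp : p.Prime) (hodd : Odd p)
    {F : Type*} [Field F] [Fintype F] [DecidableEq F] [CharP F p]
    {n : ℕ} (C : Submodule F (Fin n → F))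
    (hone : (fun _ : Fin n => (1 : F)) ∈ C)
    (hdiv : ∀ c ∈ C, p ∣ hammingNorm c) :
    ∀ c ∈ C, ∀ u ∈ C, ∑ i, c i * u i = 0 := by
  have hn : p ∣ n := by
    have h := hdiv _ hone
    simpa [hammingNorm] using h
  have hfib : ∀ c ∈ C, ∀ l : F, p ∣ (Finset.univ.filter fun i => c i = l).card := by
    intro c hc l
    have hd : (c - l • fun _ : Fin n => (1 : F)) ∈ C :=
      C.sub_mem hc (C.smul_mem _ hone)
    have h := hdiv _ hd
    have hnorm : hammingNorm (c - l • fun _ : Fin n => (1 : F)) =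
        (Finset.univ.filter fun i => ¬ c i = l).card := by
      simp [hammingNorm, sub_eq_zero]
    have hcard : (Finset.univ.filter fun i => c i = l).card +
        hammingNorm (c - l • fun _ : Fin n => (1 : F)) = n := by
      rw [hnorm]
      simpa using Finset.card_filter_add_card_filter_not
        (s := (Finset.univ : Finset (Fin n))) (p := fun i => c i = l)
    have hdvd : p ∣ (Finset.univ.filter fun i => c i = l).card +
        hammingNorm (c - l • fun _ : Fin n => (1 : F)) := by rw [hcard]; exact hn
    exact (Nat.dvd_add_iff_left h).mpr hdvd
  have hsq : ∀ c ∈ C, ∑ i, c i * c i = 0 := by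
    intro c hc
    rw [show (∑ i, c i * c i) = ∑ i ∈ Finset.univ, (fun x : F => x * x) (c i) from rfl,
      Finset.sum_comp (fun x : F => x * x) c]
    apply Finset.sum_eq_zero
    intro l _
    rw [nsmul_eq_mul, (CharP.cast_eq_zero_iff F p _).mpr (hfib c hc l), zero_mul]
  have h2 : (2 : F) ≠ 0 := by
    intro h
    have := (CharP.cast_eq_zero_iff F p 2).mp (by exact_mod_cast h)
    have hp2 : p = 2 := ((Nat.prime_dvd_prime_iff_eq hp Nat.prime_two).mp this)
    rw [hp2] at hodd
    exact (Nat.odd_iff.mp hodd) |>.symm.trans_ne (by norm_num) rfl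
  intro c hc u hu
  have hcu := hsq _ (C.add_mem hc hu)
  have hc2 := hsq c hc
  have hu2 := hsq u hu
  have hexp : ∑ i, ((c + u) i) * ((c + u) i) =
      (∑ i, c i * c i) + (2 * ∑ i, c i * u i) + ∑ i, u i * u i := by
    simp only [Pi.add_apply, Finset.mul_sum]
    rw [← Finset.sum_add_distrib, ← Finset.sum_add_distrib]
    apply Finset.sum_congr rfl
    intro i _
    ring
  rw [hcu, hc2, hu2] at hexp
  have : 2 * ∑ i, c i * u i = 0 := by linear_combination -hexp
  exact (mul_eq_zero.mp this).resolve_left h2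
end

section
/- Let q be an odd prime power, m > 2, and D = {x ∈ GF(q^m) : Tr_{q^m/q}(x) = 0}. The code C = {(Tr_{q^m/q}(bx) + c)_{x ∈ D} : b ∈ GF(q^m), c ∈ GF(q)} has length q^{m−1}, dimension m, minimum distance q^{m−1} − q^{m−2}, and every nonzero codeword has weight q^{m−1} or q^{m−1} − q^{m−2}; specifically there are q−1 codewords of weight q^{m−1} and q(q^{m−1}−1) codewords of weight q^{m−1}−q^{m−2}. -/
/-! The trace form of `E/F` is nondegenerate, so `x ↦ Tr(b x)` vanishes on the hyperplane
`D = ker Tr` only when `b ∈ F`. For `b ∈ F` the codeword of `(b, c)` is the constant `c`;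
otherwise `x ↦ Tr(b x)` is a nonzero functional on `D`, so each of its fibres, in particular the
zero set `{Tr(b x) = -c}` of the codeword, has `|D| / q = q^(m-2)` points. The encoding map has
kernel `F ∙ (1, 0)`, which gives dimension `m`, and the weight distribution follows by counting
the `q` constant codewords against the remaining `q^m - q`. -/

open Finset

/-- The encoding map (b, c) ↦ (Tr_{E/F}(b x) + c)_{x ∈ D}, where
D = {x ∈ E : Tr_{E/F}(x) = 0}. -/
noncomputable def traceCodeMap (F E : Type*) [Field F] [Field E] [Algebra F E]
    [FiniteDimensional F E] :
    (E × F) →ₗ[F] ({x : E // Algebra.trace F E x = 0} → F) where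
  toFun := fun bc x => Algebra.trace F E (bc.1 * x.1) + bc.2
  map_add' := by
    intro a b
    funext x
    simp [add_mul, map_add]
    ring
  map_smul' := by
    intro a b
    funext x
    simp [smul_mul_assoc]
    ring

open Function

theorem hammingNorm_add_card_filter_eq_zero {ι β : Type*} [Fintype ι] [Zero β] [DecidableEq β]
    (w : ι → β) : hammingNorm w + #{i | w i = 0} = Fintype.card ι := by
  rw [hammingNorm, add_comm, card_filter_add_card_filter_not, card_univ]

theorem hammingNorm_const {ι β : Type*} [Fintype ι] [Zero β] [DecidableEq β] {c : β}
    (hc : c ≠ 0) : hammingNorm (const ι c) = Fintype.card ι := by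
  simp [hammingNorm, hc]

theorem LinearMap.natCard_fiber_mul_natCard {K V : Type*} [Field K] [AddCommGroup V] [Module K V]
    {f : V →ₗ[K] K} (hf : f ≠ 0) (t : K) :
    Nat.card {x // f x = t} * Nat.card K = Nat.card V := by
  obtain ⟨v, rfl⟩ := LinearMap.surjective_of_ne_zero hf t
  have hfiber : {x // f x = f v} ≃ LinearMap.ker f :=
    (Equiv.subRight v).subtypeEquiv fun x => by simp [sub_eq_zero]
  have hquot : V ⧸ LinearMap.ker f ≃ K :=
    (f.quotKerEquivOfSurjective (LinearMap.surjective_of_ne_zero hf)).toEquiv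
  rw [Nat.card_congr hfiber, ← Nat.card_congr hquot, mul_comm]
  exact ((LinearMap.ker f).toAddSubgroup.card_eq_card_quotient_mul_card_addSubgroup).symm

theorem Module.finrank_eq_of_card_eq_pow {K V : Type*} [DivisionRing K] [AddCommGroup V]
    [Module K V] [Fintype K] [Fintype V] {q m : ℕ} (hK : Fintype.card K = q)
    (hV : Fintype.card V = q ^ m) : Module.finrank K V = m :=
  Nat.pow_right_injective (hK ▸ Fintype.one_lt_card) <| by
    simp only [← hK, ← Module.card_eq_pow_finrank, hV]

section TraceCode

variable {F E : Type*} [Field F] [Field E] [Algebra F E] [FiniteDimensional F E]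

theorem Algebra.mem_range_algebraMap_of_trace_mul_eq_zero [Algebra.IsSeparable F E] {b : E}
    (h : ∀ x, Algebra.trace F E x = 0 → Algebra.trace F E (b * x) = 0) :
    b ∈ Set.range (algebraMap F E) := by
  have hker : ⨅ _ : Unit, LinearMap.ker (Algebra.trace F E) ≤
      LinearMap.ker (Algebra.trace F E ∘ₗ LinearMap.mulLeft F b) := by
    simpa [SetLike.le_def] using h
  -- a functional vanishing on `ker Tr` is a multiple of `Tr`
  obtain ⟨a, ha⟩ := Submodule.mem_span_singleton.1 (by
    simpa using mem_span_of_iInf_ker_le_ker hker)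
  refine ⟨a, (sub_eq_zero.1 <| (traceForm_nondegenerate F E).1 _ fun x => ?_).symm⟩
  have hx : a * Algebra.trace F E x = Algebra.trace F E (b * x) := by
    simpa using LinearMap.congr_fun ha x
  simp [Algebra.traceForm_apply, ← hx, ← Algebra.smul_def]

theorem traceCodeMap_apply (b : E) (c : F) (x : {x : E // Algebra.trace F E x = 0}) :
    traceCodeMap F E (b, c) x = Algebra.trace F E (b * x) + c :=
  rfl

theorem traceCodeMap_algebraMap (a c : F) :
    traceCodeMap F E (algebraMap F E a, c) = const _ c := by
  funext x
  rw [traceCodeMap_apply, ← Algebra.smul_def, map_smul, x.2, smul_zero, zero_add, const_apply]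

theorem range_const_subset_range_traceCodeMap :
    Set.range (const {x : E // Algebra.trace F E x = 0}) ⊆
      (LinearMap.range (traceCodeMap F E) : Set ({x : E // Algebra.trace F E x = 0} → F)) :=
  Set.range_subset_iff.2 fun c => ⟨(algebraMap F E 0, c), traceCodeMap_algebraMap 0 c⟩

theorem ker_traceCodeMap [Algebra.IsSeparable F E] :
    LinearMap.ker (traceCodeMap F E) = F ∙ (1, 0) := by
  ext ⟨b, c⟩
  rw [LinearMap.mem_ker, Submodule.mem_span_singleton]
  constructor
  · intro h
    have hword (x : {x : E // Algebra.trace F E x = 0}) : Algebra.trace F E (b * x) + c = 0 :=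
      congrFun h x
    have hc : c = 0 := by simpa using hword ⟨0, map_zero _⟩
    obtain ⟨a, rfl⟩ := Algebra.mem_range_algebraMap_of_trace_mul_eq_zero fun x hx => by
      simpa [hc] using hword ⟨x, hx⟩
    exact ⟨a, by simp [Algebra.smul_def, hc]⟩
  · rintro ⟨a, h⟩
    obtain ⟨rfl, rfl⟩ := Prod.ext_iff.1 h
    simpa [Algebra.smul_def] using traceCodeMap_algebraMap (E := E) a 0

theorem finrank_range_traceCodeMap [Algebra.IsSeparable F E] :
    Module.finrank F (LinearMap.range (traceCodeMap F E)) = Module.finrank F E := by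
  have h := (traceCodeMap F E).finrank_range_add_finrank_ker
  rw [ker_traceCodeMap, finrank_span_singleton (by simp), Module.finrank_prod,
    Module.finrank_self] at h
  omega

theorem natCard_ker_trace_mul [Algebra.IsSeparable F E] :
    Nat.card {x : E // Algebra.trace F E x = 0} * Nat.card F = Nat.card E :=
  LinearMap.natCard_fiber_mul_natCard
    (fun h => by simpa [h] using Algebra.trace_surjective F E 1) 0

theorem natCard_zeros_traceCodeMap_mul [Algebra.IsSeparable F E] {b : E}
    (hb : b ∉ Set.range (algebraMap F E)) (c : F) :
    Nat.card {x : {x : E // Algebra.trace F E x = 0} // traceCodeMap F E (b, c) x = 0}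
      * Nat.card F = Nat.card {x : E // Algebra.trace F E x = 0} := by
  let g := Algebra.trace F E ∘ₗ LinearMap.mulLeft F b ∘ₗ
    (LinearMap.ker (Algebra.trace F E)).subtype
  have hg : g ≠ 0 := fun hg => hb <| Algebra.mem_range_algebraMap_of_trace_mul_eq_zero
    fun x hx => LinearMap.congr_fun hg ⟨x, hx⟩
  let hD : LinearMap.ker (Algebra.trace F E) ≃ {x : E // Algebra.trace F E x = 0} :=
    Equiv.subtypeEquivRight fun _ => LinearMap.mem_ker
  rw [← Nat.card_congr hD, ← LinearMap.natCard_fiber_mul_natCard hg (-c)]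
  congr 1
  exact Nat.card_congr (hD.subtypeEquiv fun x => by
    simp [g, traceCodeMap_apply, hD, Equiv.subtypeEquivRight_apply, add_eq_zero_iff_eq_neg]).symm

end TraceCode

section FiniteField

variable {F E : Type*} [Field F] [Field E] [Fintype F] [Fintype E] [DecidableEq F] [Algebra F E]
  [FiniteDimensional F E] {q m : ℕ}

theorem card_ker_trace (hF : Fintype.card F = q) (hE : Fintype.card E = q ^ m) (hm : m ≠ 0) :
    Fintype.card {x : E // Algebra.trace F E x = 0} = q ^ (m - 1) := by
  have h := natCard_ker_trace_mul (F := F) (E := E)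
  simp only [Nat.card_eq_fintype_card] at h
  rw [hF, hE, ← Nat.sub_add_cancel (Nat.one_le_iff_ne_zero.2 hm), pow_succ] at h
  exact Nat.eq_of_mul_eq_mul_right (hF ▸ Fintype.card_pos) h

theorem hammingNorm_traceCodeMap_of_notMem_range (hF : Fintype.card F = q)
    (hE : Fintype.card E = q ^ m) (hm : 2 ≤ m) {b : E} (hb : b ∉ Set.range (algebraMap F E))
    (c : F) : hammingNorm (traceCodeMap F E (b, c)) = q ^ (m - 1) - q ^ (m - 2) := by
  have hzeros := natCard_zeros_traceCodeMap_mul hb c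
  simp only [Nat.card_eq_fintype_card] at hzeros
  rw [hF, card_ker_trace hF hE (by omega), show m - 1 = m - 2 + 1 by omega, pow_succ] at hzeros
  have hzeros' := Nat.eq_of_mul_eq_mul_right (hF ▸ Fintype.card_pos) hzeros
  have h := hammingNorm_add_card_filter_eq_zero (traceCodeMap F E (b, c))
  rw [card_ker_trace hF hE (by omega), ← Fintype.card_subtype, hzeros'] at h
  omega

theorem hammingNorm_const_ker_trace (hF : Fintype.card F = q) (hE : Fintype.card E = q ^ m)
    (hm : m ≠ 0) {c : F} (hc : c ≠ 0) :
    hammingNorm (const {x : E // Algebra.trace F E x = 0} c) = q ^ (m - 1) :=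
  card_ker_trace hF hE hm ▸ hammingNorm_const hc

theorem mem_range_const_or_hammingNorm_eq (hF : Fintype.card F = q)
    (hE : Fintype.card E = q ^ m) (hm : 2 ≤ m) {w : {x : E // Algebra.trace F E x = 0} → F}
    (hw : w ∈ LinearMap.range (traceCodeMap F E)) :
    w ∈ Set.range (const _) ∨ hammingNorm w = q ^ (m - 1) - q ^ (m - 2) := by
  obtain ⟨⟨b, c⟩, rfl⟩ := hw
  by_cases hb : b ∈ Set.range (algebraMap F E)
  · obtain ⟨a, rfl⟩ := hb
    exact .inl ⟨c, (traceCodeMap_algebraMap a c).symm⟩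
  · exact .inr (hammingNorm_traceCodeMap_of_notMem_range hF hE hm hb c)

theorem hammingNorm_traceCodeMap_eq_iff (hF : Fintype.card F = q)
    (hE : Fintype.card E = q ^ m) (hm : 2 ≤ m) {w : {x : E // Algebra.trace F E x = 0} → F}
    (hw : w ∈ LinearMap.range (traceCodeMap F E)) :
    hammingNorm w = q ^ (m - 1) ↔ w ∈ Set.range (const _) \ {0} := by
  have hq : 1 < q := hF ▸ Fintype.one_lt_card
  have hgap : 0 < q ^ (m - 2) ∧ q ^ (m - 2) < q ^ (m - 1) :=
    ⟨pow_pos (by omega) _, Nat.pow_lt_pow_right hq (by omega)⟩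
  constructor
  · intro h
    rcases mem_range_const_or_hammingNorm_eq hF hE hm hw with hc | h'
    · refine ⟨hc, fun h0 => ?_⟩
      rw [Set.mem_singleton_iff.1 h0, hammingNorm_zero] at h
      omega
    · omega
  · rintro ⟨⟨c, rfl⟩, hc⟩
    exact hammingNorm_const_ker_trace hF hE (by omega) fun h => hc (by simp [h])

theorem hammingNorm_traceCodeMap_eq_sub_iff (hF : Fintype.card F = q)
    (hE : Fintype.card E = q ^ m) (hm : 2 ≤ m) {w : {x : E // Algebra.trace F E x = 0} → F}
    (hw : w ∈ LinearMap.range (traceCodeMap F E)) :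
    hammingNorm w = q ^ (m - 1) - q ^ (m - 2) ↔ w ∉ Set.range (const _) := by
  have hq : 1 < q := hF ▸ Fintype.one_lt_card
  have hgap : 0 < q ^ (m - 2) ∧ q ^ (m - 2) < q ^ (m - 1) :=
    ⟨pow_pos (by omega) _, Nat.pow_lt_pow_right hq (by omega)⟩
  refine ⟨?_, (mem_range_const_or_hammingNorm_eq hF hE hm hw).resolve_left⟩
  rintro h ⟨c, rfl⟩
  by_cases hc : c = 0
  · simp [hc] at h
    omega
  · rw [hammingNorm_const_ker_trace hF hE (by omega) hc] at h
    omega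

theorem natCard_hammingNorm_traceCodeMap_eq (hF : Fintype.card F = q)
    (hE : Fintype.card E = q ^ m) (hm : 2 ≤ m) :
    Nat.card {w : {x : E // Algebra.trace F E x = 0} → F //
      w ∈ LinearMap.range (traceCodeMap F E) ∧ hammingNorm w = q ^ (m - 1)} = q - 1 := by
  have : Nonempty {x : E // Algebra.trace F E x = 0} := ⟨⟨0, map_zero _⟩⟩
  have hset : {w | w ∈ LinearMap.range (traceCodeMap F E) ∧ hammingNorm w = q ^ (m - 1)} =
      Set.range (const _) \ {0} :=
    Set.ext fun w => ⟨fun h => (hammingNorm_traceCodeMap_eq_iff hF hE hm h.1).1 h.2,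
      fun h => have hw := range_const_subset_range_traceCodeMap h.1
        ⟨hw, (hammingNorm_traceCodeMap_eq_iff hF hE hm hw).2 h⟩⟩
  rw [← Set.coe_ofPred, hset, Nat.card_coe_set_eq,
    Set.ncard_sdiff_singleton_of_mem (by exact ⟨0, rfl⟩),
    Set.ncard_range_of_injective const_injective, Nat.card_eq_fintype_card, hF]

theorem natCard_hammingNorm_traceCodeMap_eq_sub (hF : Fintype.card F = q)
    (hE : Fintype.card E = q ^ m) (hm : 2 ≤ m) :
    Nat.card {w : {x : E // Algebra.trace F E x = 0} → F //
      w ∈ LinearMap.range (traceCodeMap F E) ∧ hammingNorm w = q ^ (m - 1) - q ^ (m - 2)} =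
      q * (q ^ (m - 1) - 1) := by
  have : Nonempty {x : E // Algebra.trace F E x = 0} := ⟨⟨0, map_zero _⟩⟩
  have hset : {w | w ∈ LinearMap.range (traceCodeMap F E) ∧
      hammingNorm w = q ^ (m - 1) - q ^ (m - 2)} =
      (LinearMap.range (traceCodeMap F E) : Set _) \ Set.range (const _) :=
    Set.ext fun w => and_congr_right (hammingNorm_traceCodeMap_eq_sub_iff hF hE hm)
  have hcode : (LinearMap.range (traceCodeMap F E) :
      Set ({x : E // Algebra.trace F E x = 0} → F)).ncard = q ^ m := by
    rw [← Nat.card_coe_set_eq, SetLike.coe_sort_coe, Module.natCard_eq_pow_finrank (K := F),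
      finrank_range_traceCodeMap, Module.finrank_eq_of_card_eq_pow hF hE,
      Nat.card_eq_fintype_card, hF]
  have hsplit := Set.ncard_sdiff_add_ncard_of_subset
    (range_const_subset_range_traceCodeMap (F := F) (E := E))
  rw [Set.ncard_range_of_injective const_injective, Nat.card_eq_fintype_card, hF, hcode,
    ← Nat.sub_add_cancel (show 1 ≤ m by omega), pow_succ'] at hsplit
  rw [← Set.coe_ofPred, hset, Nat.card_coe_set_eq, Nat.mul_sub_one]
  omega

end FiniteField

theorem stmt4_general {m : ℕ} (hm : 2 < m)
    {F E : Type*} [Field F] [Field E] [Fintype F] [Fintype E] [DecidableEq F]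
    [Algebra F E] [FiniteDimensional F E]
    (q : ℕ)
    (hcardF : Fintype.card F = q) (hcardE : Fintype.card E = q ^ m)
    (C : Submodule F ({x : E // Algebra.trace F E x = 0} → F))
    (hC : C = LinearMap.range (traceCodeMap F E)) :
    Fintype.card {x : E // Algebra.trace F E x = 0} = q ^ (m - 1) ∧
    Module.finrank F C = m ∧
    (∀ w ∈ C, w ≠ 0 →
      hammingNorm w = q ^ (m - 1) ∨ hammingNorm w = q ^ (m - 1) - q ^ (m - 2)) ∧
    (∀ w ∈ C, w ≠ 0 → q ^ (m - 1) - q ^ (m - 2) ≤ hammingNorm w) ∧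
    Nat.card {w : {x : E // Algebra.trace F E x = 0} → F //
        w ∈ C ∧ hammingNorm w = q ^ (m - 1)} = q - 1 ∧
    Nat.card {w : {x : E // Algebra.trace F E x = 0} → F //
        w ∈ C ∧ hammingNorm w = q ^ (m - 1) - q ^ (m - 2)} = q * (q ^ (m - 1) - 1) := by
  subst hC
  have hweight (w) (hw : w ∈ LinearMap.range (traceCodeMap F E)) (hw0 : w ≠ 0) :
      hammingNorm w = q ^ (m - 1) ∨ hammingNorm w = q ^ (m - 1) - q ^ (m - 2) := by
    by_cases hc : w ∈ Set.range (const _)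
    · exact .inl ((hammingNorm_traceCodeMap_eq_iff hcardF hcardE hm.le hw).2 ⟨hc, hw0⟩)
    · exact .inr ((hammingNorm_traceCodeMap_eq_sub_iff hcardF hcardE hm.le hw).2 hc)
  refine ⟨card_ker_trace hcardF hcardE (by omega),
    finrank_range_traceCodeMap.trans (Module.finrank_eq_of_card_eq_pow hcardF hcardE), hweight,
    fun w hw hw0 => ?_, natCard_hammingNorm_traceCodeMap_eq hcardF hcardE hm.le,
    natCard_hammingNorm_traceCodeMap_eq_sub hcardF hcardE hm.le⟩
  rcases hweight w hw hw0 with h | h <;> rw [h]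
  exact Nat.sub_le _ _

/-- Let q be an odd prime power, m > 2, D = {x ∈ GF(q^m) : Tr(x) = 0}. The code
C = {(Tr(bx) + c)_{x∈D} : b ∈ GF(q^m), c ∈ GF(q)} has length q^{m−1}, dimension m,
minimum distance q^{m−1} − q^{m−2}, every nonzero codeword has weight q^{m−1} or
q^{m−1} − q^{m−2}, with q−1 codewords of weight q^{m−1} and q(q^{m−1}−1) codewords of
weight q^{m−1} − q^{m−2}. -/
theorem stmt4 {p e m : ℕ} (hp : p.Prime) (hodd : Odd p) (he : 0 < e) (hm : 2 < m)
    {F E : Type*} [Field F] [Field E] [Fintype F] [Fintype E] [DecidableEq F] [DecidableEq E]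
    [Algebra F E] [FiniteDimensional F E]
    (q : ℕ) (hq : q = p ^ e)
    (hcardF : Fintype.card F = q) (hcardE : Fintype.card E = q ^ m)
    (C : Submodule F ({x : E // Algebra.trace F E x = 0} → F))
    (hC : C = LinearMap.range (traceCodeMap F E)) :
    Fintype.card {x : E // Algebra.trace F E x = 0} = q ^ (m - 1) ∧
    Module.finrank F C = m ∧
    (∀ w ∈ C, w ≠ 0 →
      hammingNorm w = q ^ (m - 1) ∨ hammingNorm w = q ^ (m - 1) - q ^ (m - 2)) ∧
    (∀ w ∈ C, w ≠ 0 → q ^ (m - 1) - q ^ (m - 2) ≤ hammingNorm w) ∧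
    Nat.card {w : {x : E // Algebra.trace F E x = 0} → F //
        w ∈ C ∧ hammingNorm w = q ^ (m - 1)} = q - 1 ∧
    Nat.card {w : {x : E // Algebra.trace F E x = 0} → F //
        w ∈ C ∧ hammingNorm w = q ^ (m - 1) - q ^ (m - 2)} = q * (q ^ (m - 1) - 1) :=
  stmt4_general hm q hcardF hcardE C hC
end

section
/- Let q be an odd prime power, m > 2, and D = {x ∈ GF(q^m) : Tr_{q^m/q}(x) = 0}. The code C = {(Tr_{q^m/q}(bx) + c)_{x ∈ D} : b ∈ GF(q^m), c ∈ GF(q)} is self-orthogonal. -/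
set_option linter.unusedSectionVars false

section aux

variable {F E : Type*} [Field F] [Field E] [Fintype F] [Fintype E] [DecidableEq F] [DecidableEq E]
    [Algebra F E] [FiniteDimensional F E]

lemma sum_neg_closed (htwo : (2 : E) ≠ 0) (s : Finset E) (hs : ∀ x ∈ s, -x ∈ s)
    (f : E → F) (hf : ∀ x, f (-x) = - f x) (hf0 : f 0 = 0) : ∑ x ∈ s, f x = 0 := by
  refine Finset.sum_involution (fun a _ => -a) (fun a _ => by rw [hf]; ring)
    (fun a ha hfa => ?_) (fun a ha => hs a ha) (fun a ha => neg_neg a)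
  intro h
  have h' : -a = a := h
  have ha0 : a = 0 := by
    have h2 : (2 : E) * a = 0 := by linear_combination -h'
    rcases mul_eq_zero.mp h2 with h'' | h''
    · exact absurd h'' htwo
    · exact h''
  exact hfa (ha0 ▸ hf0)

lemma card_submodule_cast (S : Submodule F E) :
    ((Nat.card S : F) = 0) ∨ ∀ x : E, x ∈ S → x = 0 := by
  haveI : Fintype ↥S := Fintype.ofFinite _
  have hcard : Nat.card ↥S = Fintype.card F ^ Module.finrank F ↥S := by
    rw [Nat.card_eq_fintype_card]; exact Module.card_eq_pow_finrank
  by_cases hd : Module.finrank F ↥S = 0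
  · right
    have : Subsingleton ↥S := Module.finrank_zero_iff.mp hd
    intro x hx
    have h2 : (⟨x, hx⟩ : ↥S) = (⟨0, S.zero_mem⟩ : ↥S) := Subsingleton.elim _ _
    exact congrArg Subtype.val h2
  · left
    rw [hcard]
    push_cast
    rw [FiniteField.cast_card_eq_zero, zero_pow hd]

end aux


open Finset

/-- Let q be an odd prime power, m > 2, and D = {x ∈ GF(q^m) : Tr(x) = 0}. The code
C = {(Tr(bx) + c)_{x∈D} : b ∈ GF(q^m), c ∈ GF(q)} is self-orthogonal. -/
theorem stmt5 {p e m : ℕ} (hp : p.Prime) (hodd : Odd p) (he : 0 < e) (hm : 2 < m)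
    {F E : Type*} [Field F] [Field E] [Fintype F] [Fintype E] [DecidableEq F] [DecidableEq E]
    [Algebra F E] [FiniteDimensional F E]
    (q : ℕ) (hq : q = p ^ e)
    (hcardF : Fintype.card F = q) (hcardE : Fintype.card E = q ^ m)
    (C : Submodule F ({x : E // Algebra.trace F E x = 0} → F))
    (hC : C = LinearMap.range (traceCodeMap F E)) :
    ∀ w ∈ C, ∀ u ∈ C, ∑ x, w x * u x = 0 := by
  subst hC
  intro w hw u hu
  obtain ⟨⟨b, c⟩, rfl⟩ := hw
  obtain ⟨⟨b', c'⟩, rfl⟩ := hu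
  set T : E →ₗ[F] F := Algebra.trace F E with hTdef
  -- basic numerology
  have hq1 : 1 < q := by
    rw [hq]; exact Nat.one_lt_pow he.ne' hp.one_lt
  have hoddq : Odd q := by rw [hq]; exact hodd.pow
  have htwoE : (2 : E) ≠ 0 := by
    apply Ring.two_ne_zero
    intro hchar
    have h2 := FiniteField.even_card_iff_char_two.mp hchar
    rw [hcardE] at h2
    have : Odd (q ^ m) := hoddq.pow
    rw [Nat.odd_iff] at this
    omega
  -- key cardinality fact
  have keycard : ∀ b0 : E,
      (((univ.filter fun x : E => T x = 0 ∧ T (b0 * x) = 0).card : F) = 0) := by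
    intro b0
    set ψ : E →ₗ[F] F × F := T.prod (T ∘ₗ (LinearMap.mulLeft F b0)) with hψ
    have hmem : ∀ x : E, x ∈ LinearMap.ker ψ ↔ (T x = 0 ∧ T (b0 * x) = 0) := by
      intro x
      simp [hψ, LinearMap.mem_ker, LinearMap.prod_apply, Prod.mk_eq_zero]
    have hcardeq : (univ.filter fun x : E => T x = 0 ∧ T (b0 * x) = 0).card
        = Nat.card ↥(LinearMap.ker ψ) := by
      rw [Nat.card_congr (Equiv.subtypeEquivRight hmem), Nat.card_eq_fintype_card,
        Fintype.card_subtype]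
    rcases card_submodule_cast (LinearMap.ker ψ) with h | h
    · rw [hcardeq]; exact_mod_cast h
    · exfalso
      have hinj : Function.Injective ψ :=
        LinearMap.ker_eq_bot.mp ((Submodule.eq_bot_iff _).mpr h)
      have hle := Fintype.card_le_of_injective ψ hinj
      rw [hcardE, Fintype.card_prod, hcardF] at hle
      have h3 : q ^ 3 ≤ q ^ m := Nat.pow_le_pow_right hq1.le hm
      have h4 : q * q < q ^ 3 := by nlinarith
      omega
  -- the index set as a finset
  set D : Finset E := univ.filter fun x => T x = 0 with hD
  have hDneg : ∀ x ∈ D, -x ∈ D := by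
    intro x hx
    simp only [hD, mem_filter, mem_univ, true_and, map_neg] at hx ⊢
    rw [hx, neg_zero]
  have hcardD : ((D.card : F) = 0) := by
    have : D = univ.filter fun x : E => T x = 0 ∧ T ((0:E) * x) = 0 := by
      apply Finset.filter_congr
      intro x _
      simp
    rw [this]
    exact keycard 0
  have hlinsum : ∀ (s : Finset E), (∀ x ∈ s, -x ∈ s) → ∀ b0 : E,
      ∑ x ∈ s, T (b0 * x) = 0 := by
    intro s hs b0
    apply sum_neg_closed htwoE s hs
    · intro x; rw [mul_neg, map_neg]
    · rw [mul_zero, map_zero]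
  -- rewrite the sum over the subtype as a sum over D
  have hsub : ∀ f : E → F,
      ∑ x : {x : E // Algebra.trace F E x = 0}, f x.1 = ∑ x ∈ D, f x := by
    intro f
    exact (Finset.sum_subtype D (by simp [hD, hTdef]) f).symm
  have hfun : ∀ (bc : E × F) (x : {x : E // Algebra.trace F E x = 0}),
      traceCodeMap F E bc x = T (bc.1 * x.1) + bc.2 := fun bc x => rfl
  simp only [hfun]
  rw [hsub fun x => (T (b * x) + c) * (T (b' * x) + c')]
  have hexp : ∀ x ∈ D, (T (b * x) + c) * (T (b' * x) + c')
      = T (b * x) * T (b' * x) + c' * T (b * x) + c * T (b' * x) + c * c' := by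
    intro x _; ring
  rw [Finset.sum_congr rfl hexp]
  rw [Finset.sum_add_distrib, Finset.sum_add_distrib, Finset.sum_add_distrib]
  rw [← Finset.mul_sum, ← Finset.mul_sum, hlinsum D hDneg b, hlinsum D hDneg b',
    Finset.sum_const, nsmul_eq_mul, hcardD]
  -- remaining: the quadratic term
  have t1 : ∑ x ∈ D, T (b * x) * T (b' * x) = 0 := by
    rw [← Finset.sum_fiberwise D (fun x => T (b * x)) (fun x => T (b * x) * T (b' * x))]
    refine Finset.sum_eq_zero fun a _ => ?_
    have hA : ∀ x ∈ D.filter (fun x => T (b * x) = a),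
        T (b * x) * T (b' * x) = a * T (b' * x) := by
      intro x hx
      rw [(mem_filter.mp hx).2]
    rw [Finset.sum_congr rfl hA, ← Finset.mul_sum]
    suffices h : ∑ x ∈ D.filter (fun x => T (b * x) = a), T (b' * x) = 0 by
      rw [h, mul_zero]
    rcases (D.filter (fun x => T (b * x) = a)).eq_empty_or_nonempty with hemp | ⟨x₀, hx₀⟩
    · rw [hemp, Finset.sum_empty]
    · obtain ⟨hx₀D, hx₀a⟩ := mem_filter.mp hx₀
      have hx₀T : T x₀ = 0 := by
        simpa [hD] using hx₀D
      set K : Finset E := univ.filter fun x : E => T x = 0 ∧ T (b * x) = 0 with hK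
      have hKneg : ∀ x ∈ K, -x ∈ K := by
        intro x hx
        simp only [hK, mem_filter, mem_univ, true_and, mul_neg, map_neg] at hx ⊢
        exact ⟨by rw [hx.1, neg_zero], by rw [hx.2, neg_zero]⟩
      have hbij : ∑ x ∈ D.filter (fun x => T (b * x) = a), T (b' * x)
          = ∑ k ∈ K, T (b' * (x₀ + k)) := by
        refine Finset.sum_nbij' (i := fun x => x - x₀) (j := fun k => x₀ + k)
          ?_ ?_ ?_ ?_ ?_
        · intro x hx
          obtain ⟨hxD, hxa⟩ := mem_filter.mp hx
          have hxT : T x = 0 := by simpa [hD] using hxD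
          simp only [hK, mem_filter, mem_univ, true_and, mul_sub, map_sub]
          exact ⟨by rw [hxT, hx₀T, sub_zero], by rw [hxa, hx₀a, sub_self]⟩
        · intro k hk
          obtain ⟨hkT, hkb⟩ := by simpa [hK] using hk
          simp only [mem_filter, hD, mem_univ, true_and, mul_add, map_add]
          exact ⟨by rw [hx₀T, hkT, add_zero], by rw [hx₀a, hkb, add_zero]⟩
        · intro x _; ring
        · intro k _; ring
        · intro x _; ring_nf
      rw [hbij]
      have : ∀ k ∈ K, T (b' * (x₀ + k)) = T (b' * x₀) + T (b' * k) := by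
        intro k _; rw [mul_add, map_add]
      rw [Finset.sum_congr rfl this, Finset.sum_add_distrib, Finset.sum_const,
        nsmul_eq_mul, hlinsum K hKneg b', keycard b]
      ring
  rw [t1]
  ring
end

section
/- Let q = p^e with p an odd prime, m, m₁ positive integers with m₁ | m and m/m₁ odd, and α a generator of GF(q^m)^*. For a = 0, the number of squares b in GF(q^m)^* (i.e., b ∈ ⟨α²⟩) with Tr_{q^m/q^{m₁}}(b) = 0 equals (q^{m−m₁} − 1)/2. -/
/-!
Let `d = [K : L]`, which is `m / m₁` and hence odd. A nonsquare `c` of `L` stays a nonsquare in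
`K`, since `N_{K/L}(c) = c ^ d` and `d` is odd. The trace-zero elements form an `L`-subspace of
`K`, so multiplication by `c` is a bijection of it exchanging its nonzero squares with its
nonsquares.
Hence exactly half of its `q ^ (m - m₁) - 1` nonzero elements are squares.
-/

open Module

theorem Odd.isSquare_of_isSquare_pow {G₀ : Type*} [CommGroupWithZero G₀] {a : G₀} {n : ℕ}
    (hn : Odd n) (h : IsSquare (a ^ n)) : IsSquare a := by
  obtain ⟨k, rfl⟩ := hn
  rcases eq_or_ne a 0 with rfl | ha
  · exact IsSquare.zero
  have ha' : a = a ^ (2 * k + 1) / a ^ (2 * k) := by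
    rw [pow_succ, mul_div_cancel_left₀ _ (pow_ne_zero _ ha)]
  rw [ha']
  exact h.div ((even_two_mul k).isSquare_pow a)

theorem not_isSquare_algebraMap_of_odd_finrank {L K : Type*} [Field L] [Field K] [Algebra L K]
    (hodd : Odd (finrank L K)) {c : L} (hc : ¬IsSquare c) : ¬IsSquare (algebraMap L K c) := by
  rintro ⟨y, hy⟩
  refine hc (hodd.isSquare_of_isSquare_pow ⟨Algebra.norm L y, ?_⟩)
  rw [← Algebra.norm_algebraMap, hy, map_mul]

theorem FiniteField.isSquare_mul_iff_not_isSquare {F : Type*} [Field F] [Fintype F] {u b : F}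
    (hu : ¬IsSquare u) (hb : b ≠ 0) : IsSquare (u * b) ↔ ¬IsSquare b := by
  classical
  have hu0 : u ≠ 0 := by rintro rfl; exact hu IsSquare.zero
  rw [← quadraticChar_one_iff_isSquare (mul_ne_zero hu0 hb),
    ← quadraticChar_neg_one_iff_not_isSquare, map_mul,
    quadraticChar_neg_one_iff_not_isSquare.mpr hu, neg_one_mul, neg_eq_iff_eq_neg]

theorem Submodule.two_mul_ncard_nonzero_squares_add_one {L F : Type*} [Field L] [Field F]
    [Fintype F] [Algebra L F] (V : Submodule L F) {c : L} (hc : ¬IsSquare (algebraMap L F c)) :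
    2 * {b ∈ (V : Set F) | b ≠ 0 ∧ IsSquare b}.ncard + 1 = (V : Set F).ncard := by
  set u := algebraMap L F c
  have hu0 : u ≠ 0 := by rintro h; exact hc (h ▸ IsSquare.zero)
  have hmul : ∀ x ∈ V, u * x ∈ V := fun x hx => by
    rw [← Algebra.smul_def]; exact V.smul_mem c hx
  have hmul_inv : ∀ x ∈ V, u⁻¹ * x ∈ V := fun x hx => by
    rw [← map_inv₀, ← Algebra.smul_def]; exact V.smul_mem c⁻¹ hx
  set S := {b ∈ (V : Set F) | b ≠ 0 ∧ IsSquare b}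
  set N := {b ∈ (V : Set F) | ¬IsSquare b}
  have hSN : (u * ·) '' S = N := by
    ext b
    constructor
    · rintro ⟨a, ⟨haV, ha0, ha⟩, rfl⟩
      exact ⟨hmul a haV, fun h => (FiniteField.isSquare_mul_iff_not_isSquare hc ha0).mp h ha⟩
    · rintro ⟨hbV, hb⟩
      have hb0 : b ≠ 0 := by rintro rfl; exact hb IsSquare.zero
      have ha0 : u⁻¹ * b ≠ 0 := mul_ne_zero (inv_ne_zero hu0) hb0
      refine ⟨u⁻¹ * b, ⟨hmul_inv b hbV, ha0, ?_⟩, mul_inv_cancel_left₀ hu0 b⟩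
      by_contra ha
      apply hb
      simpa [hu0] using (FiniteField.isSquare_mul_iff_not_isSquare hc ha0).mpr ha
  have hV : (V : Set F) = insert 0 (S ∪ N) := by
    ext b
    by_cases hb : b = 0
    · simp [hb, S, N]
    · simp only [Set.mem_insert_iff, hb, Set.mem_union, Set.mem_ofPred_eq, S, N, false_or]
      tauto
  rw [hV, Set.ncard_insert_of_notMem (by simp [S, N]), Set.ncard_union_eq, ← hSN,
    Set.ncard_image_of_injective _ (mul_right_injective₀ hu0)]
  · ring
  · exact Set.disjoint_left.mpr fun b hS hN => hN.2 hS.2.2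

theorem Algebra.natCard_ker_trace {L K : Type*} [Field L] [Field K] [Finite L] [Algebra L K]
    [FiniteDimensional L K] :
    Nat.card (LinearMap.ker (Algebra.trace L K)) = Nat.card L ^ (finrank L K - 1) := by
  have := Module.finite_of_finite L (M := K)
  rw [Module.natCard_eq_pow_finrank (K := L)]
  congr 1
  have h := (Algebra.trace L K).finrank_range_add_finrank_ker
  rw [LinearMap.range_eq_top.mpr (Algebra.trace_surjective L K), finrank_top, finrank_self] at h
  omega

theorem FiniteField.exponent_eq_mul_finrank {L K : Type*} [Field L] [Field K] [Fintype L]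
    [Fintype K] [Algebra L K] {q m₁ m : ℕ} (hcardL : Fintype.card L = q ^ m₁)
    (hcardK : Fintype.card K = q ^ m) : m = m₁ * finrank L K := by
  have hqL : 1 < q ^ m₁ := hcardL ▸ Fintype.one_lt_card
  have hq : 1 < q := (Nat.one_lt_pow_iff (by rintro rfl; simp at hqL)).mp hqL
  refine Nat.pow_right_injective hq ?_
  dsimp only
  rw [pow_mul, ← hcardL, ← hcardK, Module.card_eq_pow_finrank (K := L)]

theorem stmt9_general {p e m m₁ : ℕ} (hodd : Odd p) (hoddq : Odd (m / m₁))
    {L K : Type*} [Field L] [Field K] [Fintype L] [Fintype K]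
    [Algebra L K] [FiniteDimensional L K]
    (q : ℕ) (hq : q = p ^ e)
    (hcardL : Fintype.card L = q ^ m₁) (hcardK : Fintype.card K = q ^ m) :
    Nat.card {b : K // b ≠ 0 ∧ (∃ y : K, y ^ 2 = b) ∧ Algebra.trace L K b = 0} =
      (q ^ (m - m₁) - 1) / 2 := by
  have hm := FiniteField.exponent_eq_mul_finrank hcardL hcardK
  have hm₁ : 0 < m₁ := Nat.pos_of_ne_zero <| by rintro rfl; simp at hoddq
  have hd : Odd (finrank L K) := by rwa [hm, Nat.mul_div_cancel_left _ hm₁] at hoddq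
  have hcharL : ringChar L ≠ 2 := fun h => by
    have := FiniteField.even_card_of_char_two h
    rw [hcardL, hq, ← Nat.even_iff] at this
    exact Nat.not_even_iff_odd.mpr hodd.pow.pow this
  obtain ⟨c, hc⟩ := FiniteField.exists_nonsquare hcharL
  have hcount := (LinearMap.ker (Algebra.trace L K)).two_mul_ncard_nonzero_squares_add_one
    (not_isSquare_algebraMap_of_odd_finrank hd hc)
  have hker : (LinearMap.ker (Algebra.trace L K) : Set K).ncard = q ^ (m - m₁) := by
    rw [← Nat.card_coe_set_eq, SetLike.coe_sort_coe, Algebra.natCard_ker_trace,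
      Nat.card_eq_fintype_card, hcardL, ← pow_mul, hm, Nat.mul_sub_one]
  have hset : {b : K | b ≠ 0 ∧ (∃ y : K, y ^ 2 = b) ∧ Algebra.trace L K b = 0} =
      {b ∈ (LinearMap.ker (Algebra.trace L K) : Set K) | b ≠ 0 ∧ IsSquare b} := by
    ext b
    simp only [isSquare_iff_exists_sq, eq_comm (a := b), SetLike.mem_coe, LinearMap.mem_ker,
      Set.mem_ofPred_eq]
    tauto
  change Nat.card {b : K | _} = _
  rw [hset, Nat.card_coe_set_eq]
  omega

/-- Let q = p^e with p an odd prime, m₁ ∣ m with m/m₁ odd. The number of nonzero squares b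
in GF(q^m) with Tr_{q^m/q^{m₁}}(b) = 0 equals (q^{m−m₁} − 1)/2. -/
theorem stmt9 {p e m m₁ : ℕ} (hp : p.Prime) (hodd : Odd p) (he : 0 < e)
    (hm₁ : 0 < m₁) (hdvd : m₁ ∣ m) (hoddq : Odd (m / m₁))
    {L K : Type*} [Field L] [Field K] [Fintype L] [Fintype K] [DecidableEq L]
    [Algebra L K] [FiniteDimensional L K]
    (q : ℕ) (hq : q = p ^ e)
    (hcardL : Fintype.card L = q ^ m₁) (hcardK : Fintype.card K = q ^ m) :
    Nat.card {b : K // b ≠ 0 ∧ (∃ y : K, y ^ 2 = b) ∧ Algebra.trace L K b = 0} =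
      (q ^ (m - m₁) - 1) / 2 :=
  stmt9_general hodd hoddq q hq hcardL hcardK
end

section
/- Let p be an odd prime and C be an [n, k, d] Griesmer code over GF(p) such that p divides d and the all-one vector is in C. Assuming the fact that a Griesmer code over GF(p) with p^e dividing its minimum distance is p^e-divisible, C is self-orthogonal. -/
open Finset

lemma normCast13 {p n : ℕ} [hp : Fact p.Prime] (c : Fin n → ZMod p) :
    (hammingNorm c : ZMod p) = ∑ i, (c i) ^ (p - 1) := by
  rw [hammingNorm, Finset.card_filter]
  push_cast
  refine Finset.sum_congr rfl fun i _ => ?_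
  by_cases h : c i ≠ 0
  · simp [h, ZMod.pow_card_sub_one_eq_one h]
  · push_neg at h
    simp [h, zero_pow (Nat.sub_ne_zero_of_lt hp.out.one_lt)]

lemma sq13 {p n : ℕ} [hp : Fact p.Prime]
    (C : Submodule (ZMod p) (Fin n → ZMod p))
    (hone : (fun _ : Fin n => (1 : ZMod p)) ∈ C)
    (hdiv : ∀ c ∈ C, p ∣ hammingNorm c)
    {y : Fin n → ZMod p} (hy : y ∈ C) :
    ∑ i, (y i) ^ 2 = 0 := by
  have hn : (n : ZMod p) = 0 := by
    rw [ZMod.natCast_eq_zero_iff]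
    have h1 := hdiv _ hone
    rwa [show hammingNorm (fun _ : Fin n => (1 : ZMod p)) = n by
      simp [hammingNorm, (one_ne_zero : (1 : ZMod p) ≠ 0)]] at h1
  have hw : ∀ l : ZMod p, ∑ i, (y i + l) ^ (p - 1) = 0 := by
    intro l
    have hmem : (fun i => y i + l) ∈ C := by
      have h2 := C.add_mem hy (C.smul_mem l hone)
      convert h2 using 1
      funext i
      simp [Pi.add_apply, Pi.smul_apply, smul_eq_mul]
    have hd := hdiv _ hmem
    have h3 : ((hammingNorm (fun i => y i + l) : ℕ) : ZMod p) = 0 :=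
      (ZMod.natCast_eq_zero_iff _ _).mpr hd
    rwa [normCast13] at h3
  have key : ∑ l : ZMod p, l ^ 2 * (∑ i, (y i + l) ^ (p - 1)) = 0 := by
    simp [hw]
  have inner : ∀ a : ZMod p,
      ∑ l : ZMod p, l ^ 2 * (a + l) ^ (p - 1) = (∑ l : ZMod p, l ^ 2) - a ^ 2 := by
    intro a
    have h4 : ∀ l : ZMod p, l ^ 2 * (a + l) ^ (p - 1)
        = l ^ 2 - (if l = -a then a ^ 2 else 0) := by
      intro l
      by_cases h : l = -a
      · subst h
        simp [zero_pow (Nat.sub_ne_zero_of_lt hp.out.one_lt)]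
      · have hne : a + l ≠ 0 := by
          intro hc
          exact h (by linear_combination hc)
        rw [ZMod.pow_card_sub_one_eq_one hne, mul_one, if_neg h, sub_zero]
    rw [Finset.sum_congr rfl fun l _ => h4 l, Finset.sum_sub_distrib,
      Finset.sum_ite_eq' Finset.univ (-a) (fun _ => a ^ 2)]
    simp
  simp_rw [Finset.mul_sum] at key
  rw [Finset.sum_comm] at key
  rw [Finset.sum_congr rfl (fun i _ => by
    simpa using inner (y i)), Finset.sum_sub_distrib, Finset.sum_const,
    Finset.card_univ, Fintype.card_fin] at key
  rw [← Nat.cast_smul_eq_nsmul (ZMod p) n, hn, zero_smul, zero_sub,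
    neg_eq_zero] at key
  exact key

/-- Let p be an odd prime and C an [n, k, d] Griesmer code over GF(p) with p ∣ d and the
all-one vector in C. Assuming the fact that a Griesmer code over GF(p) whose minimum
distance is divisible by p is p-divisible, C is self-orthogonal. -/
theorem stmt13 {p : ℕ} [Fact p.Prime] (hodd : Odd p)
    {n k d : ℕ} (C : Submodule (ZMod p) (Fin n → ZMod p))
    (hk : Module.finrank (ZMod p) C = k)
    (hd₁ : ∀ c ∈ C, c ≠ 0 → d ≤ hammingNorm c)
    (hd₂ : ∃ c ∈ C, c ≠ 0 ∧ hammingNorm c = d)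
    (hGriesmer : n = ∑ i ∈ Finset.range k, (d + p ^ i - 1) / p ^ i)
    (hpd : p ∣ d)
    (hone : (fun _ : Fin n => (1 : ZMod p)) ∈ C)
    (hfact : p ∣ d → ∀ c ∈ C, p ∣ hammingNorm c) :
    ∀ c ∈ C, ∀ u ∈ C, ∑ i, c i * u i = 0 := by
  have hdiv := hfact hpd
  intro c hc u hu
  have h1 := sq13 C hone hdiv hc
  have h2 := sq13 C hone hdiv hu
  have h3 := sq13 C hone hdiv (C.add_mem hc hu)
  have hexp : ∑ i, ((c + u) i) ^ 2
      = (∑ i, c i ^ 2) + 2 * (∑ i, c i * u i) + ∑ i, u i ^ 2 := by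
    simp only [Pi.add_apply]
    rw [Finset.mul_sum, ← Finset.sum_add_distrib, ← Finset.sum_add_distrib]
    exact Finset.sum_congr rfl fun i _ => by ring
  rw [hexp, h1, h2] at h3
  have h2ne : (2 : ZMod p) ≠ 0 := by
    have hp2 : p ≠ 2 := by
      rintro rfl
      exact (by norm_num : ¬ Odd 2) hodd
    intro hc2
    have := (ZMod.natCast_eq_zero_iff 2 p).mp (by exact_mod_cast hc2)
    exact hp2 ((Nat.prime_dvd_prime_iff_eq Fact.out Nat.prime_two).mp this)
  have : 2 * (∑ i, c i * u i) = 0 := by linear_combination h3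
  exact (mul_eq_zero.mp this).resolve_left h2ne
end

section
/- Let q be an odd prime power, let χ₁ be the canonical additive character of GF(q^m), φ₁ that of GF(q^{m₂}) with m₂ | m, and let η and η₀ be the quadratic characters of GF(q^m) and GF(q^{m₂}) respectively. For b ∈ GF(q^m)^*, define Ω(b,c) = Σ_{z ∈ GF(q^{m₂})^*} Σ_{x ∈ GF(q^m)} χ₁(z b x²) φ₁(z c). If m/m₂ is even, then Ω(b,0) = (q^{m₂} − 1)·G(η, χ₁)·η(b) and Ω(b,c) = −G(η, χ₁)·η(b) for c ≠ 0. -/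
open Finset

private lemma eta_sq_one' {F : Type*} [CommRing F] (η : MulChar F ℂ) (hη2 : η ^ 2 = 1)
    {y : F} (hy : IsUnit y) : η y * η y = 1 := by
  have h := congrArg (fun χ : MulChar F ℂ => χ y) hη2
  simp only [pow_two, MulChar.mul_apply, MulChar.one_apply hy] at h
  exact h

private lemma eta_sq_one {F : Type*} [Field F] (η : MulChar F ℂ) (hη2 : η ^ 2 = 1)
    {y : F} (hy : y ≠ 0) : η y * η y = 1 :=
  eta_sq_one' η hη2 (isUnit_iff_ne_zero.mpr hy)

private lemma eta_one_of_isSquare {F : Type*} [Field F] (η : MulChar F ℂ) (hη2 : η ^ 2 = 1)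
    {y : F} (hy : y ≠ 0) (h : IsSquare y) : η y = 1 := by
  obtain ⟨w, rfl⟩ := h
  have hw : w ≠ 0 := by rintro rfl; simp at hy
  rw [map_mul]
  exact eta_sq_one η hη2 hw

private lemma eta_isSquare_of_one {F : Type*} [Field F] [Fintype F] [DecidableEq F]
    (η : MulChar F ℂ) (hη2 : η ^ 2 = 1) (hη1 : η ≠ 1)
    {y : F} (hy : y ≠ 0) (h : η y = 1) : IsSquare y := by
  obtain ⟨g, hg⟩ := IsCyclic.exists_generator (α := Fˣ)
  have hgu : ∀ u : Fˣ, ∃ k : ℕ, g ^ k = u := by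
    intro u
    have := mem_powers_iff_mem_zpowers.mpr (hg u)
    exact (Submonoid.mem_powers_iff _ _).mp this
  have hgne : η (g : F) = -1 := by
    have hsq : η (g : F) * η (g : F) = 1 := eta_sq_one η hη2 (Units.ne_zero g)
    rcases mul_self_eq_one_iff.mp hsq with h1 | h1
    · exfalso
      apply hη1
      apply MulChar.ext
      intro u
      obtain ⟨k, rfl⟩ := hgu u
      rw [MulChar.one_apply_coe, Units.val_pow_eq_pow_val, map_pow, h1, one_pow]
    · exact h1
  obtain ⟨k, hk⟩ := hgu (Units.mk0 y hy)
  have hyk : y = (g : F) ^ k := by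
    have : ((g ^ k : Fˣ) : F) = y := by rw [hk]; rfl
    rw [← this, Units.val_pow_eq_pow_val]
  have hval : η y = (-1 : ℂ) ^ k := by rw [hyk, map_pow, hgne]
  have hkeven : Even k := by
    by_contra hodd
    rw [Nat.not_even_iff_odd] at hodd
    rw [hodd.neg_one_pow] at hval
    rw [h] at hval
    norm_num at hval
  obtain ⟨t, rfl⟩ := hkeven
  exact ⟨(g : F) ^ t, by rw [hyk, ← pow_add]⟩

private lemma eta_neg_one {F : Type*} [Field F] [Fintype F] [DecidableEq F]
    (η : MulChar F ℂ) (hη2 : η ^ 2 = 1) (hη1 : η ≠ 1)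
    {y : F} (hy : y ≠ 0) (hns : ¬ IsSquare y) : η y = -1 := by
  have hsq : η y * η y = 1 := eta_sq_one η hη2 hy
  rcases mul_self_eq_one_iff.mp hsq with h1 | h1
  · exact absurd (eta_isSquare_of_one η hη2 hη1 hy h1) hns
  · exact h1

private lemma card_sqrt {F : Type*} [Field F] [Fintype F] [DecidableEq F]
    (hF : ringChar F ≠ 2)
    (η : MulChar F ℂ) (hη2 : η ^ 2 = 1) (hη1 : η ≠ 1) (y : F) :
    ((univ.filter (fun x : F => x ^ 2 = y)).card : ℂ) = 1 + η y := by
  by_cases hy : y = 0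
  · subst hy
    have hfil : univ.filter (fun x : F => x ^ 2 = 0) = {0} := by
      ext x; simp [pow_eq_zero_iff]
    rw [hfil]
    simp [MulChar.map_nonunit η (by simp : ¬ IsUnit (0 : F))]
  by_cases hs : IsSquare y
  · obtain ⟨w, rfl⟩ := hs
    have hw : w ≠ 0 := by rintro rfl; simp at hy
    have h2 : (2 : F) ≠ 0 := Ring.two_ne_zero hF
    have hne : w ≠ -w := by
      intro hcon
      apply hw
      have : (2 : F) * w = 0 := by
        rw [two_mul]; nth_rewrite 2 [hcon]; ring
      exact (mul_eq_zero.mp this).resolve_left h2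
    have hfil : univ.filter (fun x : F => x ^ 2 = w * w) = {w, -w} := by
      ext x
      simp only [mem_filter, mem_univ, true_and, mem_insert, mem_singleton]
      constructor
      · intro h
        have hz : (x - w) * (x + w) = 0 := by
          have : x ^ 2 - w * w = 0 := by rw [h]; ring
          calc (x - w) * (x + w) = x ^ 2 - w * w := by ring
          _ = 0 := this
        rcases mul_eq_zero.mp hz with h' | h'
        · left; linear_combination h'
        · right; linear_combination h'
      · rintro (rfl | rfl) <;> ring
    rw [hfil, card_insert_of_notMem (by simpa using hne), card_singleton]
    rw [eta_one_of_isSquare η hη2 hy ⟨w, rfl⟩]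
    norm_num
  · have hfil : univ.filter (fun x : F => x ^ 2 = y) = ∅ := by
      ext x
      simp only [mem_filter, mem_univ, true_and, notMem_empty, iff_false]
      intro h
      exact hs ⟨x, by rw [← h]; ring⟩
    rw [hfil]
    rw [eta_neg_one η hη2 hη1 hy hs]
    simp

private lemma weil_sum {F : Type*} [Field F] [Fintype F] [DecidableEq F]
    (hF : ringChar F ≠ 2) (ψ : AddChar F ℂ) (hψ : ψ.IsPrimitive)
    (η : MulChar F ℂ) (hη2 : η ^ 2 = 1) (hη1 : η ≠ 1)
    {a : F} (ha : a ≠ 0) :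
    ∑ x : F, ψ (a * x ^ 2) = η a * gaussSum η ψ := by
  have h1 : ∑ x : F, ψ (a * x ^ 2)
      = ∑ y : F, ∑ x ∈ univ.filter (fun x : F => x ^ 2 = y), ψ (a * y) := by
    rw [show (∑ y : F, ∑ x ∈ univ.filter (fun x : F => x ^ 2 = y), ψ (a * y))
        = ∑ y : F, ∑ x ∈ univ.filter (fun x : F => x ^ 2 = y), ψ (a * x ^ 2) from by
      refine Finset.sum_congr rfl fun y _ => Finset.sum_congr rfl fun x hx => ?_
      rw [(mem_filter.mp hx).2]]
    rw [Finset.sum_fiberwise_eq_sum_filter univ univ (fun x : F => x ^ 2)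
      (fun x => ψ (a * x ^ 2))]
    simp
  have h2 : ∑ y : F, ∑ x ∈ univ.filter (fun x : F => x ^ 2 = y), ψ (a * y)
      = ∑ y : F, (1 + η y) * ψ (a * y) := by
    refine Finset.sum_congr rfl fun y _ => ?_
    rw [Finset.sum_const, nsmul_eq_mul, card_sqrt hF η hη2 hη1 y]
  have h3 : ∑ y : F, (1 + η y) * ψ (a * y)
      = (∑ y : F, ψ (a * y)) + ∑ y : F, η y * ψ (a * y) := by
    rw [← Finset.sum_add_distrib]
    refine Finset.sum_congr rfl fun y _ => by ring
  have h4 : ∑ y : F, ψ (a * y) = 0 := by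
    have := AddChar.sum_mulShift a hψ
    rw [if_neg ha, Nat.cast_zero] at this
    rw [← this]
    exact Finset.sum_congr rfl fun y _ => by rw [mul_comm]
  have h5 : ∑ y : F, η y * ψ (a * y) = gaussSum η (ψ.mulShift a) := by
    unfold gaussSum
    exact Finset.sum_congr rfl fun y _ => by rw [AddChar.mulShift_apply]
  have h6 : η a * gaussSum η (ψ.mulShift a) = gaussSum η ψ := by
    have := gaussSum_mulShift η ψ (Units.mk0 a ha)
    simpa using this
  have hsq : η a * η a = 1 := eta_sq_one η hη2 ha
  rw [h1, h2, h3, h4, h5, zero_add]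
  calc gaussSum η (ψ.mulShift a) = (η a * η a) * gaussSum η (ψ.mulShift a) := by
        rw [hsq, one_mul]
    _ = η a * (η a * gaussSum η (ψ.mulShift a)) := by ring
    _ = η a * gaussSum η ψ := by rw [h6]

/-- Let q be an odd prime power, m₂ ∣ m with m/m₂ even, χ₁ a canonical (primitive) additive
character of GF(q^m), φ₁ one of GF(q^{m₂}), η the quadratic character of GF(q^m). For
b ∈ GF(q^m)^*, Ω(b,c) = Σ_{z ≠ 0} Σ_x χ₁(z b x²) φ₁(z c) satisfies
Ω(b,0) = (q^{m₂} − 1) G(η,χ₁) η(b) and Ω(b,c) = −G(η,χ₁) η(b) for c ≠ 0. -/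
theorem stmt14 {p e m m₂ : ℕ} (hp : p.Prime) (hodd : Odd p) (he : 0 < e)
    (hm₂ : 0 < m₂) (hdvd : m₂ ∣ m) (heven : Even (m / m₂))
    {L K : Type*} [Field L] [Field K] [Fintype L] [Fintype K]
    [DecidableEq L] [DecidableEq K] [Algebra L K]
    (q : ℕ) (hq : q = p ^ e)
    (hcardL : Fintype.card L = q ^ m₂) (hcardK : Fintype.card K = q ^ m)
    (χ₁ : AddChar K ℂ) (hχ₁ : χ₁.IsPrimitive)
    (φ₁ : AddChar L ℂ) (hφ₁ : φ₁.IsPrimitive)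
    (η : MulChar K ℂ) (hη2 : η ^ 2 = 1) (hη1 : η ≠ 1)
    (b : K) (hb : b ≠ 0) :
    (∑ z ∈ (univ : Finset L).erase 0, ∑ x : K,
        χ₁ (algebraMap L K z * b * x ^ 2) * φ₁ (z * 0) =
      ((q ^ m₂ - 1 : ℕ) : ℂ) * gaussSum η χ₁ * η b) ∧
    ∀ c : L, c ≠ 0 →
      ∑ z ∈ (univ : Finset L).erase 0, ∑ x : K,
          χ₁ (algebraMap L K z * b * x ^ 2) * φ₁ (z * c) =
        -(gaussSum η χ₁ * η b) := by
  have hqodd : Odd q := by rw [hq]; exact hodd.pow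
  have hKodd : Odd (Fintype.card K) := by rw [hcardK]; exact hqodd.pow
  have hLodd : Odd (Fintype.card L) := by rw [hcardL]; exact hqodd.pow
  have hq0 : 0 < q := by rw [hq]; exact pow_pos hp.pos e
  have hq2 : ringChar K ≠ 2 := by
    intro h
    have h1 := FiniteField.even_card_of_char_two h
    have h2 := Nat.odd_iff.mp hKodd
    omega
  have hdvd2 : 2 * (q ^ m₂ - 1) ∣ q ^ m - 1 := by
    obtain ⟨k, hk⟩ := heven
    have hm : q ^ m = (q ^ (2 * m₂)) ^ k := by
      rw [← pow_mul]
      congr 1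
      have h := Nat.div_mul_cancel hdvd
      rw [← h, hk]; ring
    have hA : q ^ (2 * m₂) - 1 ∣ q ^ m - 1 := by
      rw [hm]
      simpa using Nat.sub_dvd_pow_sub_pow (q ^ (2 * m₂)) 1 k
    have hfac : q ^ (2 * m₂) - 1 = (q ^ m₂ - 1) * (q ^ m₂ + 1) := by
      have h1 : 1 ≤ q ^ m₂ := Nat.one_le_pow _ _ hq0
      obtain ⟨a, ha⟩ : ∃ a, q ^ m₂ = a + 1 := ⟨q ^ m₂ - 1, by omega⟩
      rw [show q ^ (2 * m₂) = q ^ m₂ * q ^ m₂ from by rw [two_mul, pow_add], ha]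
      rw [show (a + 1) * (a + 1) = a * (a + 2) + 1 from by ring]
      simp [Nat.add_sub_cancel]
    have h2dvd : 2 ∣ q ^ m₂ + 1 := by
      have := Nat.odd_iff.mp (hqodd.pow : Odd (q ^ m₂))
      omega
    obtain ⟨s, hs⟩ := h2dvd
    calc 2 * (q ^ m₂ - 1) ∣ (q ^ m₂ - 1) * (q ^ m₂ + 1) := by
          exact ⟨s, by rw [hs]; ring⟩
      _ ∣ q ^ m - 1 := hfac ▸ hA
  have hsq_u : ∀ z : L, z ≠ 0 → η (algebraMap L K z) = 1 := by
    intro z hz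
    have hu : (algebraMap L K) z ≠ 0 :=
      fun h => hz ((algebraMap L K).injective (by rw [h, map_zero]))
    apply eta_one_of_isSquare η hη2 hu
    rw [FiniteField.isSquare_iff hq2 hu]
    have hzpow : z ^ (q ^ m₂ - 1) = 1 := by
      rw [← hcardL]; exact FiniteField.pow_card_sub_one_eq_one z hz
    have hupow : (algebraMap L K z) ^ (q ^ m₂ - 1) = 1 := by
      rw [← map_pow, hzpow, map_one]
    obtain ⟨t, ht⟩ := hdvd2
    have ht' : q ^ m - 1 = 2 * ((q ^ m₂ - 1) * t) := by rw [ht]; ring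
    have hcard2 : Fintype.card K / 2 = (q ^ m₂ - 1) * t := by
      rw [hcardK]
      have hN := Nat.odd_iff.mp (hqodd.pow : Odd (q ^ m))
      have h1 : 1 ≤ q ^ m := Nat.one_le_pow _ _ hq0
      omega
    rw [hcard2, pow_mul, hupow, one_pow]
  have key : ∀ z : L, z ≠ 0 →
      ∑ x : K, χ₁ (algebraMap L K z * b * x ^ 2) = η b * gaussSum η χ₁ := by
    intro z hz
    have hu : (algebraMap L K) z ≠ 0 :=
      fun h => hz ((algebraMap L K).injective (by rw [h, map_zero]))
    have hab : algebraMap L K z * b ≠ 0 := mul_ne_zero hu hb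
    rw [weil_sum hq2 χ₁ hχ₁ η hη2 hη1 hab, map_mul, hsq_u z hz, one_mul]
  constructor
  · have hcong : ∀ z ∈ (univ : Finset L).erase 0,
        (∑ x : K, χ₁ (algebraMap L K z * b * x ^ 2) * φ₁ (z * 0))
          = η b * gaussSum η χ₁ := by
      intro z hz
      have hz0 : z ≠ 0 := (mem_erase.mp hz).1
      simp only [mul_zero, AddChar.map_zero_eq_one, mul_one]
      exact key z hz0
    rw [Finset.sum_congr rfl hcong, Finset.sum_const, nsmul_eq_mul,
      card_erase_of_mem (mem_univ 0), card_univ, hcardL]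
    ring
  · intro c hc
    have step : ∀ z ∈ (univ : Finset L).erase 0,
        (∑ x : K, χ₁ (algebraMap L K z * b * x ^ 2) * φ₁ (z * c))
          = (η b * gaussSum η χ₁) * φ₁ (z * c) := by
      intro z hz
      have hz0 : z ≠ 0 := (mem_erase.mp hz).1
      rw [← Finset.sum_mul, key z hz0]
    rw [Finset.sum_congr rfl step, ← Finset.mul_sum]
    have hsum : ∑ z ∈ (univ : Finset L).erase 0, φ₁ (z * c) = -1 := by
      rw [Finset.sum_erase_eq_sub (mem_univ 0), AddChar.sum_mulShift c hφ₁, if_neg hc]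
      simp
    rw [hsum]; ring
end

section
/- Let q be an odd prime power, m, m₂ positive integers with m₂ | m and m/m₂ odd, χ₁ and φ₁ the canonical additive characters of GF(q^m) and GF(q^{m₂}), and η, η₀ their quadratic characters. For b ∈ GF(q^m)^* define Ω(b,c) = Σ_{z ∈ GF(q^{m₂})^*} Σ_{x ∈ GF(q^m)} χ₁(z b x²) φ₁(z c). Then Ω(b,0) = 0, and for c ≠ 0, Ω(b,c) = G(η, χ₁)·G(η₀, φ₁)·η(b)·η₀(c). -/
open Finset

/-- For a quadratic multiplicative character, `η a * η a = 1` for nonzero `a`. -/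
lemma mulChar_mul_self_eq_one {F : Type*} [Field F] (η : MulChar F ℂ)
    (h2 : η ^ 2 = 1) {a : F} (ha : a ≠ 0) : η a * η a = 1 := by
  have h : (η ^ 2) a = (1 : MulChar F ℂ) a := by rw [h2]
  rwa [MulChar.pow_apply' η two_ne_zero, MulChar.one_apply (isUnit_iff_ne_zero.mpr ha), sq] at h

/-- Uniqueness of the quadratic character: any multiplicative character of order two on a
finite field agrees with `quadraticChar`. -/
lemma mulChar_eq_quadraticChar {F : Type*} [Field F] [Fintype F] [DecidableEq F]
    (η : MulChar F ℂ) (h2 : η ^ 2 = 1) (h1 : η ≠ 1) (a : F) :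
    η a = ((quadraticChar F a : ℤ) : ℂ) := by
  have hsq1 : ∀ x : F, IsSquare x → x ≠ 0 → η x = 1 := by
    rintro x ⟨y, rfl⟩ hx
    have hy : y ≠ 0 := by rintro rfl; simp at hx
    rw [map_mul]; exact mulChar_mul_self_eq_one η h2 hy
  obtain ⟨u, hu⟩ := MulChar.ne_one_iff.mp h1
  have hu0 : (u : F) ≠ 0 := u.ne_zero
  have huns : ¬ IsSquare (u : F) := fun h => hu (hsq1 _ h hu0)
  have huval : η u = -1 := by
    have := mulChar_mul_self_eq_one η h2 hu0
    rcases (sq_eq_one_iff (a := η (u : F))).mp (by rwa [sq]) with h | h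
    · exact absurd h hu
    · exact h
  by_cases ha : a = 0
  · subst ha; rw [MulChar.map_zero, quadraticChar_zero]; norm_num
  by_cases hs : IsSquare a
  · rw [hsq1 a hs ha, (quadraticChar_one_iff_isSquare ha).mpr hs]; norm_num
  · have hqa : quadraticChar F a = -1 := quadraticChar_neg_one_iff_not_isSquare.mpr hs
    have hqu : quadraticChar F (u : F) = -1 := quadraticChar_neg_one_iff_not_isSquare.mpr huns
    have hprod : IsSquare (a * u) := by
      refine (quadraticChar_one_iff_isSquare (mul_ne_zero ha hu0)).mp ?_
      rw [map_mul, hqa, hqu]; ring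
    have h3 : η a * η u = 1 := by
      rw [← map_mul]; exact hsq1 _ hprod (mul_ne_zero ha hu0)
    rw [huval] at h3
    rw [hqa]
    push_cast
    linear_combination -h3

/-- The Gauss-sum evaluation of a quadratic exponential sum:
`∑ x, χ (a x²) = η a * gaussSum η χ` for `a ≠ 0`. -/
lemma sum_char_mul_sq {K : Type*} [Field K] [Fintype K] [DecidableEq K]
    (hchar : ringChar K ≠ 2)
    (χ : AddChar K ℂ) (hχ : χ.IsPrimitive)
    (η : MulChar K ℂ) (h2 : η ^ 2 = 1) (h1 : η ≠ 1)
    {a : K} (ha : a ≠ 0) :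
    ∑ x : K, χ (a * x ^ 2) = η a * gaussSum η χ := by
  have key : ∑ x : K, χ (a * x ^ 2)
      = ∑ y : K, (((quadraticChar K y : ℤ) : ℂ) + 1) * χ (a * y) := by
    rw [← Finset.sum_fiberwise' univ (fun x : K => x ^ 2) (fun y => χ (a * y))]
    refine Finset.sum_congr rfl fun y _ => ?_
    have hset : (univ.filter fun x : K => x ^ 2 = y) = {x : K | x ^ 2 = y}.toFinset := by
      ext x; simp
    rw [Finset.sum_const, hset, nsmul_eq_mul]
    congr 1
    have hcard := quadraticChar_card_sqrts hchar y
    have : (({x : K | x ^ 2 = y}.toFinset.card : ℤ) : ℂ) = ((quadraticChar K y : ℤ) : ℂ) + 1 := by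
      rw [hcard]; push_cast; ring
    exact_mod_cast this
  rw [key]
  simp_rw [add_mul, one_mul, Finset.sum_add_distrib]
  have h0 : ∑ y : K, χ (a * y) = 0 := by
    simp_rw [mul_comm a]
    rw [AddChar.sum_mulShift a hχ]
    simp [ha]
  have h1' : ∑ y : K, ((quadraticChar K y : ℤ) : ℂ) * χ (a * y)
      = gaussSum η (AddChar.mulShift χ a) := by
    refine Finset.sum_congr rfl fun y _ => ?_
    rw [AddChar.mulShift_apply, mulChar_eq_quadraticChar η h2 h1]
  rw [h0, add_zero, h1']
  have hgs := gaussSum_mulShift η χ (Units.mk0 a ha)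
  rw [Units.val_mk0] at hgs
  have haa : η a * η a = 1 := mulChar_mul_self_eq_one η h2 ha
  calc gaussSum η (AddChar.mulShift χ a)
      = (η a * η a) * gaussSum η (AddChar.mulShift χ a) := by rw [haa, one_mul]
    _ = η a * gaussSum η χ := by rw [mul_assoc, hgs]

/-- In an odd-degree extension of finite fields of odd characteristic, the quadratic
character of the big field restricts to the quadratic character of the small field. -/
lemma mulChar_restrict {L K : Type*} [Field L] [Field K] [Fintype L] [Fintype K]
    [DecidableEq L] [DecidableEq K] [Algebra L K]
    (Q s : ℕ) (hQ : Odd Q) (hs : Odd s)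
    (hcardL : Fintype.card L = Q) (hcardK : Fintype.card K = Q ^ s)
    (η : MulChar K ℂ) (hη2 : η ^ 2 = 1) (hη1 : η ≠ 1)
    (η₀ : MulChar L ℂ) (hη₀2 : η₀ ^ 2 = 1) (hη₀1 : η₀ ≠ 1)
    (z : L) : η (algebraMap L K z) = η₀ z := by
  by_cases hz : z = 0
  · subst hz; rw [map_zero, MulChar.map_zero, MulChar.map_zero]
  have hinj : Function.Injective (algebraMap L K) := (algebraMap L K).injective
  have hz' : algebraMap L K z ≠ 0 := fun h => hz (hinj (by rw [h, map_zero]))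
  obtain ⟨n, hn⟩ := id hQ
  obtain ⟨N, hN⟩ := (hQ.pow : Odd (Q ^ s))
  set T := ∑ i ∈ Finset.range s, Q ^ i with hT
  have hToddm : T % 2 = 1 := by
    rw [hT, Finset.sum_nat_mod]
    rw [Finset.sum_congr rfl (fun i _ => (Nat.odd_iff.mp (hQ.pow : Odd (Q ^ i)) : Q ^ i % 2 = 1))]
    simp [Nat.odd_iff.mp hs]
  have hTodd : Odd T := Nat.odd_iff.mpr hToddm
  have hNT : N = n * T := by
    have hInt : (T : ℤ) * ((Q : ℤ) - 1) = (Q : ℤ) ^ s - 1 := by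
      rw [hT]; push_cast; exact geom_sum_mul _ _
    have hq1 : (Q : ℤ) = 2 * n + 1 := by exact_mod_cast hn
    have hq2 : ((Q : ℤ)) ^ s = 2 * N + 1 := by exact_mod_cast hN
    rw [hq1] at hInt
    rw [hq1] at hq2
    have h3 : 2 * (N : ℤ) = 2 * ((n : ℤ) * T) := by linear_combination -hInt - hq2
    have h4 : (N : ℤ) = (n : ℤ) * T := mul_left_cancel₀ two_ne_zero h3
    exact_mod_cast h4
  have hzQ : z ^ (Q - 1) = 1 := by
    have := FiniteField.pow_card_sub_one_eq_one z hz
    rwa [hcardL] at this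
  have hw : (z ^ n) ^ 2 = 1 := by
    rw [← pow_mul, show n * 2 = Q - 1 by omega]; exact hzQ
  have hpow : z ^ N = z ^ n := by
    rw [hNT, pow_mul]
    rcases sq_eq_one_iff.mp hw with h | h
    · rw [h, one_pow]
    · rw [h, hTodd.neg_one_pow]
  have hcharK : ringChar K ≠ 2 := by
    intro h
    have := FiniteField.even_card_iff_char_two.mp h
    rw [hcardK] at this
    exact absurd this (by rw [Nat.odd_iff.mp (hQ.pow : Odd (Q ^ s))]; norm_num)
  have hcharL : ringChar L ≠ 2 := by
    intro h
    have := FiniteField.even_card_iff_char_two.mp h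
    rw [hcardL] at this
    exact absurd this (by rw [Nat.odd_iff.mp hQ]; norm_num)
  have hiff : IsSquare (algebraMap L K z) ↔ IsSquare z := by
    rw [FiniteField.isSquare_iff hcharK hz', FiniteField.isSquare_iff hcharL hz]
    have e1 : Fintype.card K / 2 = N := by rw [hcardK]; omega
    have e2 : Fintype.card L / 2 = n := by rw [hcardL]; omega
    rw [e1, e2, ← map_pow, hpow]
    constructor
    · intro h
      apply hinj
      rw [h, map_one]
    · intro h
      rw [h, map_one]
  rw [mulChar_eq_quadraticChar η hη2 hη1, mulChar_eq_quadraticChar η₀ hη₀2 hη₀1]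
  by_cases hsq : IsSquare z
  · rw [(quadraticChar_one_iff_isSquare hz').mpr (hiff.mpr hsq),
      (quadraticChar_one_iff_isSquare hz).mpr hsq]
  · rw [quadraticChar_neg_one_iff_not_isSquare.mpr (fun h => hsq (hiff.mp h)),
      quadraticChar_neg_one_iff_not_isSquare.mpr hsq]

/-- Let q be an odd prime power, m₂ ∣ m with m/m₂ odd, χ₁ and φ₁ canonical (primitive)
additive characters of GF(q^m) and GF(q^{m₂}), η and η₀ their quadratic characters. For
b ∈ GF(q^m)^*, Ω(b,c) = Σ_{z ≠ 0} Σ_x χ₁(z b x²) φ₁(z c) satisfies Ω(b,0) = 0 and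
Ω(b,c) = G(η,χ₁) G(η₀,φ₁) η(b) η₀(c) for c ≠ 0. -/
theorem stmt15 {p e m m₂ : ℕ} (hp : p.Prime) (hodd : Odd p) (he : 0 < e)
    (hm₂ : 0 < m₂) (hdvd : m₂ ∣ m) (hoddq : Odd (m / m₂))
    {L K : Type*} [Field L] [Field K] [Fintype L] [Fintype K]
    [DecidableEq L] [DecidableEq K] [Algebra L K]
    (q : ℕ) (hq : q = p ^ e)
    (hcardL : Fintype.card L = q ^ m₂) (hcardK : Fintype.card K = q ^ m)
    (χ₁ : AddChar K ℂ) (hχ₁ : χ₁.IsPrimitive)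
    (φ₁ : AddChar L ℂ) (hφ₁ : φ₁.IsPrimitive)
    (η : MulChar K ℂ) (hη2 : η ^ 2 = 1) (hη1 : η ≠ 1)
    (η₀ : MulChar L ℂ) (hη₀2 : η₀ ^ 2 = 1) (hη₀1 : η₀ ≠ 1)
    (b : K) (hb : b ≠ 0) :
    (∑ z ∈ (univ : Finset L).erase 0, ∑ x : K,
        χ₁ (algebraMap L K z * b * x ^ 2) * φ₁ (z * 0) = 0) ∧
    ∀ c : L, c ≠ 0 →
      ∑ z ∈ (univ : Finset L).erase 0, ∑ x : K,
          χ₁ (algebraMap L K z * b * x ^ 2) * φ₁ (z * c) =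
        gaussSum η χ₁ * gaussSum η₀ φ₁ * η b * η₀ c := by
  have hqodd : Odd q := hq ▸ hodd.pow
  have hms : m = m₂ * (m / m₂) := (Nat.mul_div_cancel' hdvd).symm
  have hcardK' : Fintype.card K = (q ^ m₂) ^ (m / m₂) := by
    rw [hcardK, ← pow_mul, ← hms]
  have hrestrict : ∀ z : L, η (algebraMap L K z) = η₀ z := fun z =>
    mulChar_restrict (q ^ m₂) (m / m₂) hqodd.pow hoddq hcardL hcardK' η hη2 hη1 η₀ hη₀2 hη₀1 z
  have hinj : Function.Injective (algebraMap L K) := (algebraMap L K).injective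
  have hcharK : ringChar K ≠ 2 := by
    intro h
    have := FiniteField.even_card_iff_char_two.mp h
    rw [hcardK] at this
    exact absurd this (by rw [Nat.odd_iff.mp (hqodd.pow : Odd (q ^ m))]; norm_num)
  have hGsum : ∀ a : K, a ≠ 0 → ∑ x : K, χ₁ (a * x ^ 2) = η a * gaussSum η χ₁ :=
    fun a ha => sum_char_mul_sq hcharK χ₁ hχ₁ η hη2 hη1 ha
  have hmain : ∀ c : L,
      ∑ z ∈ (univ : Finset L).erase 0, ∑ x : K,
          χ₁ (algebraMap L K z * b * x ^ 2) * φ₁ (z * c)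
        = η b * gaussSum η χ₁ * ∑ z ∈ (univ : Finset L).erase 0, η₀ z * φ₁ (z * c) := by
    intro c
    rw [Finset.mul_sum]
    refine Finset.sum_congr rfl fun z hz => ?_
    have hz0 : z ≠ 0 := Finset.ne_of_mem_erase hz
    have hz' : algebraMap L K z ≠ 0 := fun h => hz0 (hinj (by rw [h, map_zero]))
    have hzz : algebraMap L K z * b ≠ 0 := mul_ne_zero hz' hb
    rw [← Finset.sum_mul, hGsum _ hzz, map_mul, hrestrict z]
    ring
  have hη₀0 : η₀ (0 : L) = 0 := MulChar.map_zero η₀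
  constructor
  · rw [hmain 0]
    have h1 : ∑ z ∈ (univ : Finset L).erase 0, η₀ z * φ₁ (z * 0)
        = ∑ z ∈ (univ : Finset L).erase 0, η₀ z := by
      refine Finset.sum_congr rfl fun z _ => ?_
      rw [mul_zero, AddChar.map_zero_eq_one, mul_one]
    rw [h1, Finset.sum_erase _ hη₀0, MulChar.sum_eq_zero_of_ne_one hη₀1, mul_zero]
  · intro c hc
    rw [hmain c]
    have hsum : ∑ z ∈ (univ : Finset L).erase 0, η₀ z * φ₁ (z * c)
        = gaussSum η₀ (AddChar.mulShift φ₁ c) := by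
      rw [Finset.sum_erase _ (by rw [hη₀0, zero_mul])]
      refine Finset.sum_congr rfl fun z _ => ?_
      rw [AddChar.mulShift_apply, mul_comm c z]
    rw [hsum]
    have hgs := gaussSum_mulShift η₀ φ₁ (Units.mk0 c hc)
    rw [Units.val_mk0] at hgs
    have hcc : η₀ c * η₀ c = 1 := mulChar_mul_self_eq_one η₀ hη₀2 hc
    have hG : gaussSum η₀ (AddChar.mulShift φ₁ c) = η₀ c * gaussSum η₀ φ₁ := by
      calc gaussSum η₀ (AddChar.mulShift φ₁ c)
          = (η₀ c * η₀ c) * gaussSum η₀ (AddChar.mulShift φ₁ c) := by rw [hcc, one_mul]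
        _ = η₀ c * gaussSum η₀ φ₁ := by rw [mul_assoc, hgs]
    rw [hG]
    ring
end
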